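/- Let S : X → E be an admissible impact map and A ⊂ E an admissible acceptance set. Assume S is positively homogeneous (S(λX) = λS(X) for all λ > 0 and X ∈ X) and A is a cone. Then α = −δ_D, i.e. α(Z) = 0 for Z ∈ D and α(Z) = −∞ otherwise, where D := {Z ∈ X'_+ : there exists W ∈ bar(A) such that E[⟨X,Z⟩] ≥ E[S(X)W] for all X ∈ X}. -/

import Mathlib

open MeasureTheory Filter Set
open scoped ENNReal

noncomputable section

namespace SystemicRisk

variable {Ω : Type*} [MeasurableSpace Ω]

/-- A random variable is essentially bounded. -/
def EssBdd {μ : Measure Ω} (f : Ω →ₘ[μ] ℝ) : Prop :=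
  ∃ C : ℝ, ∀ᵐ ω ∂μ, |f ω| ≤ C

/-- The scalar pairing `E[U W]`. -/
def ip {μ : Measure Ω} (U W : Ω →ₘ[μ] ℝ) : ℝ := ∫ ω, U ω * W ω ∂μ

/-- The Köthe dual of a set of random variables. -/
def kdual {μ : Measure Ω} (L : Set (Ω →ₘ[μ] ℝ)) : Set (Ω →ₘ[μ] ℝ) :=
  {Z | ∀ f ∈ L, Integrable (fun ω => f ω * Z ω) μ}

/-- `nrm` is a Banach lattice norm on `L` (w.r.t. the a.s. order). -/
structure IsBLNorm {μ : Measure Ω} (L : Set (Ω →ₘ[μ] ℝ)) (nrm : (Ω →ₘ[μ] ℝ) → ℝ) : Prop where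
  nonneg : ∀ f ∈ L, 0 ≤ nrm f
  eq_zero_iff : ∀ f ∈ L, (nrm f = 0 ↔ f = 0)
  smul_eq : ∀ f ∈ L, ∀ c : ℝ, nrm (c • f) = |c| * nrm f
  triangle : ∀ f ∈ L, ∀ g ∈ L, nrm (f + g) ≤ nrm f + nrm g
  solid : ∀ f ∈ L, ∀ g ∈ L, |f| ≤ |g| → nrm f ≤ nrm g
  complete : ∀ u : ℕ → (Ω →ₘ[μ] ℝ), (∀ n, u n ∈ L) →
      (∀ ε : ℝ, 0 < ε → ∃ N : ℕ, ∀ m ≥ N, ∀ n ≥ N, nrm (u m - u n) < ε) →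
      ∃ f ∈ L, ∀ ε : ℝ, 0 < ε → ∃ N : ℕ, ∀ n ≥ N, nrm (u n - f) < ε

/-- `L` is an admissible space: a linear subspace of `L^0` which is a Banach lattice
(for the a.s. order, with norm `nrm`) satisfying `L^∞ ⊆ L ⊆ L^1`. -/
structure IsAdmissible {μ : Measure Ω} (L : Set (Ω →ₘ[μ] ℝ)) (nrm : (Ω →ₘ[μ] ℝ) → ℝ) : Prop where
  zero_mem : (0 : Ω →ₘ[μ] ℝ) ∈ L
  add_mem : ∀ f ∈ L, ∀ g ∈ L, f + g ∈ L
  smul_mem : ∀ (c : ℝ), ∀ f ∈ L, c • f ∈ L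
  sup_mem : ∀ f ∈ L, ∀ g ∈ L, f ⊔ g ∈ L
  inf_mem : ∀ f ∈ L, ∀ g ∈ L, f ⊓ g ∈ L
  linfty_subset : ∀ f, EssBdd f → f ∈ L
  subset_lone : ∀ f ∈ L, Integrable f μ
  banach : IsBLNorm L nrm

variable {d : ℕ}

/-- The product space `X = X_1 × ⋯ × X_d`. -/
def prodSet {μ : Measure Ω} (Li : Fin d → Set (Ω →ₘ[μ] ℝ)) : Set (Fin d → (Ω →ₘ[μ] ℝ)) :=
  {X | ∀ i, X i ∈ Li i}

/-- The vector pairing `E[⟨X,Z⟩] = ∑ i, E[X_i Z_i]`. -/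
def pairing {μ : Measure Ω} (X Z : Fin d → (Ω →ₘ[μ] ℝ)) : ℝ := ∑ i, ip (X i) (Z i)

/-- The constant random vector associated with `m ∈ ℝ^d`. -/
def cvec (μ : Measure Ω) (m : Fin d → ℝ) : Fin d → (Ω →ₘ[μ] ℝ) :=
  fun i => (AEEqFun.const Ω (m i) : Ω →ₘ[μ] ℝ)

/-- The weak topology `σ(P, D)` on a set of random vectors `P` induced by the pairing
with elements of `D`. -/
def wtop {μ : Measure Ω} (P D : Set (Fin d → (Ω →ₘ[μ] ℝ))) : TopologicalSpace ↥P :=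
  TopologicalSpace.induced
    (fun X : ↥P => fun Z : ↥D => pairing (X : Fin d → (Ω →ₘ[μ] ℝ)) (Z : Fin d → (Ω →ₘ[μ] ℝ)))
    Pi.topologicalSpace

/-- The weak topology `σ(P, D)` on a set of random variables `P` induced by the pairing
with elements of `D`. -/
def wtop1 {μ : Measure Ω} (P D : Set (Ω →ₘ[μ] ℝ)) : TopologicalSpace ↥P :=
  TopologicalSpace.induced
    (fun U : ↥P => fun W : ↥D => ip (U : Ω →ₘ[μ] ℝ) (W : Ω →ₘ[μ] ℝ))
    Pi.topologicalSpace

/-- An admissible impact map `S : X → E`. -/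
structure IsAdmissibleImpact {μ : Measure Ω} (XX XX' : Set (Fin d → (Ω →ₘ[μ] ℝ)))
    (EE EE' : Set (Ω →ₘ[μ] ℝ)) (S : (Fin d → (Ω →ₘ[μ] ℝ)) → (Ω →ₘ[μ] ℝ)) : Prop where
  mapsTo : ∀ X ∈ XX, S X ∈ EE
  nonconst : ∃ X ∈ XX, ∃ Y ∈ XX, S X ≠ S Y
  normalized : S 0 = 0
  mono : ∀ X ∈ XX, ∀ Y ∈ XX, X ≤ Y → S X ≤ S Y
  concave : ∀ X ∈ XX, ∀ Y ∈ XX, ∀ t : ℝ, 0 ≤ t → t ≤ 1 →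
      t • S X + (1 - t) • S Y ≤ S (t • X + (1 - t) • Y)
  usc : ∀ W ∈ EE', (0 : Ω →ₘ[μ] ℝ) ≤ W →
      @UpperSemicontinuous (↥XX) ℝ (wtop XX XX') _
        (fun X : ↥XX => ∫ ω, S (X : Fin d → (Ω →ₘ[μ] ℝ)) ω * W ω ∂μ)

/-- An admissible acceptance set `A ⊆ E` (relative to the impact map `S`). -/
structure IsAdmissibleAcceptance {μ : Measure Ω} (XX : Set (Fin d → (Ω →ₘ[μ] ℝ)))
    (EE EE' : Set (Ω →ₘ[μ] ℝ)) (S : (Fin d → (Ω →ₘ[μ] ℝ)) → (Ω →ₘ[μ] ℝ))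
    (A : Set (Ω →ₘ[μ] ℝ)) : Prop where
  subset : A ⊆ EE
  preimage_nonempty : ∃ X ∈ XX, S X ∈ A
  preimage_proper : ∃ X ∈ XX, S X ∉ A
  zero_mem : (0 : Ω →ₘ[μ] ℝ) ∈ A
  mono : ∀ U ∈ A, ∀ V ∈ EE, (0 : Ω →ₘ[μ] ℝ) ≤ V → U + V ∈ A
  convex : ∀ U ∈ A, ∀ V ∈ A, ∀ t : ℝ, 0 ≤ t → t ≤ 1 → t • U + (1 - t) • V ∈ A
  closed : @IsClosed (↥EE) (wtop1 EE EE') {U : ↥EE | (U : Ω →ₘ[μ] ℝ) ∈ A}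

/-- The systemic acceptance set `S⁻¹(A) = {X ∈ X : S(X) ∈ A}`. -/
def sysAcc {μ : Measure Ω} (XX : Set (Fin d → (Ω →ₘ[μ] ℝ)))
    (S : (Fin d → (Ω →ₘ[μ] ℝ)) → (Ω →ₘ[μ] ℝ)) (A : Set (Ω →ₘ[μ] ℝ)) :
    Set (Fin d → (Ω →ₘ[μ] ℝ)) :=
  {X ∈ XX | S X ∈ A}

/-- The "first allocate, then aggregate" systemic risk measure `ρ`. -/
def rho (μ : Measure Ω) (S : (Fin d → (Ω →ₘ[μ] ℝ)) → (Ω →ₘ[μ] ℝ)) (A : Set (Ω →ₘ[μ] ℝ))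
    (X : Fin d → (Ω →ₘ[μ] ℝ)) : EReal :=
  ⨅ m ∈ {m : Fin d → ℝ | S (X + cvec μ m) ∈ A}, ((∑ i, m i : ℝ) : EReal)

/-- The (lower) support function of a set of random vectors. -/
def suppV {μ : Measure Ω} (B : Set (Fin d → (Ω →ₘ[μ] ℝ))) (Z : Fin d → (Ω →ₘ[μ] ℝ)) : EReal :=
  ⨅ X ∈ B, ((pairing X Z : ℝ) : EReal)

/-- The barrier cone of a set of random vectors, inside the dual set `D`. -/
def barrV {μ : Measure Ω} (B D : Set (Fin d → (Ω →ₘ[μ] ℝ))) : Set (Fin d → (Ω →ₘ[μ] ℝ)) :=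
  {Z ∈ D | ⊥ < suppV B Z}

/-- The (lower) support function of a set of random variables. -/
def suppS {μ : Measure Ω} (A : Set (Ω →ₘ[μ] ℝ)) (W : Ω →ₘ[μ] ℝ) : EReal :=
  ⨅ U ∈ A, ((ip U W : ℝ) : EReal)

/-- The barrier cone of a set of random variables, inside the dual set `D`. -/
def barrS {μ : Measure Ω} (A D : Set (Ω →ₘ[μ] ℝ)) : Set (Ω →ₘ[μ] ℝ) :=
  {W ∈ D | ⊥ < suppS A W}

/-- The generic penalty function with dual variables `W` ranging over `K`. -/
def penalty {μ : Measure Ω} (XX : Set (Fin d → (Ω →ₘ[μ] ℝ)))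
    (A : Set (Ω →ₘ[μ] ℝ)) (S : (Fin d → (Ω →ₘ[μ] ℝ)) → (Ω →ₘ[μ] ℝ))
    (K : Set (Ω →ₘ[μ] ℝ)) (Z : Fin d → (Ω →ₘ[μ] ℝ)) : EReal :=
  ⨆ W ∈ K, (suppS A W +
    ⨅ X ∈ XX, ((pairing X Z - ∫ ω, S X ω * W ω ∂μ : ℝ) : EReal))

/-- a.s. strictly positive random variables. -/
def strictPos (μ : Measure Ω) : Set (Ω →ₘ[μ] ℝ) := {W | ∀ᵐ ω ∂μ, 0 < W ω}

/-- The penalty function `α`. -/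
def alpha {μ : Measure Ω} (XX : Set (Fin d → (Ω →ₘ[μ] ℝ))) (EE' : Set (Ω →ₘ[μ] ℝ))
    (A : Set (Ω →ₘ[μ] ℝ)) (S : (Fin d → (Ω →ₘ[μ] ℝ)) → (Ω →ₘ[μ] ℝ)) :
    (Fin d → (Ω →ₘ[μ] ℝ)) → EReal :=
  penalty XX A S (barrS A EE')

/-- The penalty function `α⁺`. -/
def alphaPlus {μ : Measure Ω} (XX : Set (Fin d → (Ω →ₘ[μ] ℝ))) (EE' : Set (Ω →ₘ[μ] ℝ))
    (A : Set (Ω →ₘ[μ] ℝ)) (S : (Fin d → (Ω →ₘ[μ] ℝ)) → (Ω →ₘ[μ] ℝ)) :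
    (Fin d → (Ω →ₘ[μ] ℝ)) → EReal :=
  penalty XX A S (barrS A EE' ∩ (strictPos μ ∪ {0}))

/-- a.s. strictly positive random vectors. -/
def strictPosV (μ : Measure Ω) (d : ℕ) : Set (Fin d → (Ω →ₘ[μ] ℝ)) :=
  {Z | ∀ i, ∀ᵐ ω ∂μ, 0 < Z i ω}

/-- The set `C` of nonnegative dual vectors with all components of expectation one. -/
def Cset {μ : Measure Ω} (XX' : Set (Fin d → (Ω →ₘ[μ] ℝ))) : Set (Fin d → (Ω →ₘ[μ] ℝ)) :=
  {Z ∈ XX' | (∀ i, (0 : Ω →ₘ[μ] ℝ) ≤ Z i) ∧ ∀ i, (∫ ω, Z i ω ∂μ) = 1}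

/-- A map with values in `[−∞,∞]` is proper on `P` if it never attains `−∞` on `P`
and is finite somewhere on `P`. -/
def ProperOn {β : Type*} (P : Set β) (f : β → EReal) : Prop :=
  (∀ x ∈ P, f x ≠ ⊥) ∧ ∃ x ∈ P, f x ≠ ⊤

/-- The positive part of an extended real number, as an extended nonnegative real. -/
def epos (x : EReal) : ℝ≥0∞ := if x = ⊤ then ⊤ else ENNReal.ofReal x.toReal

/-- The integral of an extended-real-valued function. -/
def eintegral (μ : Measure Ω) (g : Ω → EReal) : EReal :=
  ((∫⁻ ω, epos (g ω) ∂μ : ℝ≥0∞) : EReal) - ((∫⁻ ω, epos (-(g ω)) ∂μ : ℝ≥0∞) : EReal)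

/-! Positive homogeneity of `S` and the cone property of `A` make both parts of each term of
the supremum defining `α` infima of positively homogeneous functions over cones, so they only take
the values `0` and `−∞`: `σ_A(W) = 0` on `bar(A)`, and `inf_X (E[⟨X,Z⟩] − E[S(X)W])` is `0` or `−∞`
according as `E[S(X)W] ≤ E[⟨X,Z⟩]` for all `X` or not. Hence `α(Z) = 0` exactly when some
`W ∈ bar(A)` is dominated by `Z`. Such a `W` is nonnegative because `A + E_+ ⊆ A`, and since
`S(X) ≥ 0` for `X ≥ 0`, testing the domination on indicators in each coordinate forces `Z ≥ 0`. -/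

theorem eq_bot_of_forall_le_mul_of_neg {J : EReal} {a : ℝ} (ha : a < 0)
    (h : ∀ c : ℝ, 0 < c → J ≤ ((c * a : ℝ) : EReal)) : J = ⊥ := by
  refine (EReal.eq_bot_iff_forall_lt J).2 fun y => ?_
  have hc : 0 < (|y| + 1) / -a := div_pos (by positivity) (neg_pos.2 ha)
  have hca : (|y| + 1) / -a * a = -(|y| + 1) := by field_simp [ha.ne]
  refine (h _ hc).trans_lt (EReal.coe_lt_coe_iff.2 ?_)
  linarith [neg_abs_le y]

theorem iInf_eq_ite_of_posHomogeneous {M : Type*} [Zero M] [SMul ℝ M] {C : Set M} {f : M → ℝ}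
    (h0 : (0 : M) ∈ C) (hf0 : f 0 = 0) (hC : ∀ c : ℝ, 0 < c → ∀ x ∈ C, c • x ∈ C)
    (hf : ∀ c : ℝ, 0 < c → ∀ x ∈ C, f (c • x) = c * f x) [Decidable (∀ x ∈ C, 0 ≤ f x)] :
    ⨅ x ∈ C, (f x : EReal) = if ∀ x ∈ C, 0 ≤ f x then 0 else ⊥ := by
  split_ifs with hnonneg
  · refine le_antisymm ?_ (le_iInf₂ fun x hx => EReal.coe_nonneg.2 (hnonneg x hx))
    simpa [hf0] using iInf₂_le (f := fun x (_ : x ∈ C) => (f x : EReal)) 0 h0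
  · push Not at hnonneg
    obtain ⟨x, hx, hfx⟩ := hnonneg
    refine eq_bot_of_forall_le_mul_of_neg hfx fun c hc => ?_
    rw [← hf c hc x hx]
    exact iInf₂_le (c • x) (hC c hc x hx)

theorem iSup₂_ite_eq {ι α : Type*} [CompleteLattice α] (s : Set ι) (p : ι → Prop)
    [DecidablePred p] [Decidable (∃ i ∈ s, p i)] (a : α) :
    ⨆ i ∈ s, (if p i then a else ⊥) = if ∃ i ∈ s, p i then a else ⊥ := by
  split_ifs with h
  · obtain ⟨i, hi, hp⟩ := h
    refine le_antisymm (iSup₂_le fun j _ => ?_) (le_iSup₂_of_le i hi (by rw [if_pos hp]))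
    split_ifs <;> simp
  · exact iSup₂_eq_bot.2 fun i hi => if_neg fun hp => h ⟨i, hi, hp⟩

section

variable {μ : Measure Ω}

theorem ip_zero_left (W : Ω →ₘ[μ] ℝ) : ip 0 W = 0 := by
  refine integral_eq_zero_of_ae ?_
  filter_upwards [AEEqFun.coeFn_zero (β := ℝ) (μ := μ)] with ω h
  simp [h]

theorem ip_smul_left (c : ℝ) (U W : Ω →ₘ[μ] ℝ) : ip (c • U) W = c * ip U W := by
  rw [ip, ip, ← integral_const_mul]
  refine integral_congr_ae ?_
  filter_upwards [AEEqFun.coeFn_smul c U] with ω h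
  simp [h, mul_assoc]

theorem ip_nonneg {U W : Ω →ₘ[μ] ℝ} (hU : 0 ≤ U) (hW : 0 ≤ W) : 0 ≤ ip U W := by
  refine integral_nonneg_of_ae ?_
  filter_upwards [AEEqFun.coeFn_le.2 hU, AEEqFun.coeFn_le.2 hW,
    AEEqFun.coeFn_zero (β := ℝ) (μ := μ)] with ω hUω hWω h0
  rw [h0] at hUω hWω
  exact mul_nonneg hUω hWω

theorem pairing_zero_left (Z : Fin d → (Ω →ₘ[μ] ℝ)) : pairing 0 Z = 0 :=
  Finset.sum_eq_zero fun i _ => ip_zero_left (Z i)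

theorem pairing_smul_left (c : ℝ) (X Z : Fin d → (Ω →ₘ[μ] ℝ)) :
    pairing (c • X) Z = c * pairing X Z := by
  simp only [pairing, Finset.mul_sum, Pi.smul_apply, ip_smul_left]

theorem pairing_single_left (i : Fin d) (V : Ω →ₘ[μ] ℝ) (Z : Fin d → (Ω →ₘ[μ] ℝ)) :
    pairing (Pi.single i V) Z = ip V (Z i) := by
  rw [pairing, Finset.sum_eq_single i (fun j _ hj => by simp [hj, ip_zero_left]) (by simp)]
  simp

theorem essBdd_const (c : ℝ) : EssBdd (AEEqFun.const Ω c : Ω →ₘ[μ] ℝ) :=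
  ⟨|c|, by filter_upwards [AEEqFun.coeFn_const (β := ℝ) (μ := μ) Ω c] with ω h; simp [h]⟩

theorem IsAdmissible.integrable_of_mem_kdual {L : Set (Ω →ₘ[μ] ℝ)} {nrm : (Ω →ₘ[μ] ℝ) → ℝ}
    (hL : IsAdmissible L nrm) {W : Ω →ₘ[μ] ℝ} (hW : W ∈ kdual L) : Integrable W μ := by
  refine (hW _ (hL.linfty_subset _ (essBdd_const 1))).congr ?_
  filter_upwards [AEEqFun.coeFn_const (β := ℝ) (μ := μ) Ω 1] with ω h
  simp [h]

instance : PosSMulMono ℝ (Ω →ₘ[μ] ℝ) where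
  smul_le_smul_of_nonneg_left c hc U V hUV := by
    rw [← AEEqFun.coeFn_le]
    filter_upwards [AEEqFun.coeFn_smul c U, AEEqFun.coeFn_smul c V, AEEqFun.coeFn_le.2 hUV]
      with ω hU hV hω
    rw [hU, hV]
    exact smul_le_smul_of_nonneg_left hω hc

theorem zero_mem_prodSet {Li : Fin d → Set (Ω →ₘ[μ] ℝ)} {nrmX : Fin d → (Ω →ₘ[μ] ℝ) → ℝ}
    (hLi : ∀ i, IsAdmissible (Li i) (nrmX i)) : (0 : Fin d → (Ω →ₘ[μ] ℝ)) ∈ prodSet Li :=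
  fun i => (hLi i).zero_mem

theorem smul_mem_prodSet {Li : Fin d → Set (Ω →ₘ[μ] ℝ)} {nrmX : Fin d → (Ω →ₘ[μ] ℝ) → ℝ}
    (hLi : ∀ i, IsAdmissible (Li i) (nrmX i)) (c : ℝ) {X : Fin d → (Ω →ₘ[μ] ℝ)}
    (hX : X ∈ prodSet Li) : c • X ∈ prodSet Li :=
  fun i => (hLi i).smul_mem c (X i) (hX i)

theorem nonneg_of_forall_ip_nonneg {F : Ω →ₘ[μ] ℝ} (hF : Integrable F μ)
    (h : ∀ V : Ω →ₘ[μ] ℝ, EssBdd V → 0 ≤ V → 0 ≤ ip V F) : 0 ≤ F := by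
  rw [← AEEqFun.coeFn_le]
  refine (AEEqFun.coeFn_zero (β := ℝ) (μ := μ)).trans_le
    (ae_nonneg_of_forall_setIntegral_nonneg hF fun s hs _ => ?_)
  set V : Ω →ₘ[μ] ℝ := AEEqFun.mk (s.indicator 1) (measurable_one.indicator hs).aestronglyMeasurable
  have hV : ⇑V =ᵐ[μ] s.indicator 1 := AEEqFun.coeFn_mk _ _
  have hVF : ip V F = ∫ ω in s, F ω ∂μ := by
    rw [ip, ← integral_indicator hs]
    refine integral_congr_ae ?_
    filter_upwards [hV] with ω hω
    by_cases hωs : ω ∈ s <;> simp [hω, hωs]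
  rw [← hVF]
  refine h V ⟨1, ?_⟩ ?_
  · filter_upwards [hV] with ω hω
    by_cases hωs : ω ∈ s <;> simp [hω, hωs]
  · rw [← AEEqFun.coeFn_le]
    filter_upwards [hV, AEEqFun.coeFn_zero (β := ℝ) (μ := μ)] with ω hω h0
    by_cases hωs : ω ∈ s <;> simp [hω, h0, hωs]

theorem suppS_eq_zero_of_cone {A : Set (Ω →ₘ[μ] ℝ)} (h0 : (0 : Ω →ₘ[μ] ℝ) ∈ A)
    (hcone : ∀ c : ℝ, 0 < c → ∀ U ∈ A, c • U ∈ A) {W : Ω →ₘ[μ] ℝ} (hW : ⊥ < suppS A W) :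
    suppS A W = 0 := by
  classical
  have hσ := iInf_eq_ite_of_posHomogeneous (f := fun U => ip U W) h0 (ip_zero_left W) hcone
    fun c _ U _ => ip_smul_left c U W
  rw [suppS, hσ] at hW ⊢
  split_ifs at hW ⊢
  · rfl
  · exact absurd hW (lt_irrefl ⊥)

open scoped Classical in
theorem iInf_pairing_sub_eq_ite {Li : Fin d → Set (Ω →ₘ[μ] ℝ)}
    {nrmX : Fin d → (Ω →ₘ[μ] ℝ) → ℝ} (hLi : ∀ i, IsAdmissible (Li i) (nrmX i))
    {S : (Fin d → (Ω →ₘ[μ] ℝ)) → (Ω →ₘ[μ] ℝ)} (hS0 : S 0 = 0)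
    (hph : ∀ c : ℝ, 0 < c → ∀ X ∈ prodSet Li, S (c • X) = c • S X)
    (Z : Fin d → (Ω →ₘ[μ] ℝ)) (W : Ω →ₘ[μ] ℝ) :
    ⨅ X ∈ prodSet Li, ((pairing X Z - ip (S X) W : ℝ) : EReal) =
      if ∀ X ∈ prodSet Li, ip (S X) W ≤ pairing X Z then 0 else ⊥ := by
  refine (iInf_eq_ite_of_posHomogeneous (f := fun X => pairing X Z - ip (S X) W)
    (zero_mem_prodSet hLi) (by simp [hS0, pairing_zero_left, ip_zero_left])
    (fun c _ X hX => smul_mem_prodSet hLi c hX) fun c hc X hX => ?_).trans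
    (if_congr (forall₂_congr fun X _ => sub_nonneg) rfl rfl)
  simp only [pairing_smul_left, hph c hc X hX, ip_smul_left]
  ring

theorem barrS_nonneg {EE : Set (Ω →ₘ[μ] ℝ)} {nrmE : (Ω →ₘ[μ] ℝ) → ℝ} {A : Set (Ω →ₘ[μ] ℝ)}
    (hE : IsAdmissible EE nrmE) (h0 : (0 : Ω →ₘ[μ] ℝ) ∈ A)
    (hmono : ∀ U ∈ A, ∀ V ∈ EE, (0 : Ω →ₘ[μ] ℝ) ≤ V → U + V ∈ A)
    {W : Ω →ₘ[μ] ℝ} (hW : W ∈ barrS A (kdual EE)) : 0 ≤ W := by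
  refine nonneg_of_forall_ip_nonneg (hE.integrable_of_mem_kdual hW.1) fun V hVb hV => ?_
  by_contra! hneg
  have hray : ∀ c : ℝ, 0 < c → c • V ∈ A := fun c hc => by
    simpa using hmono 0 h0 (c • V) (hE.smul_mem c V (hE.linfty_subset V hVb))
      (smul_nonneg hc.le hV)
  refine hW.2.ne' (eq_bot_of_forall_le_mul_of_neg hneg fun c hc => ?_)
  rw [← ip_smul_left]
  exact iInf₂_le _ (hray c hc)

theorem nonneg_of_ip_le_pairing {Li : Fin d → Set (Ω →ₘ[μ] ℝ)}
    {nrmX : Fin d → (Ω →ₘ[μ] ℝ) → ℝ} (hLi : ∀ i, IsAdmissible (Li i) (nrmX i))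
    {S : (Fin d → (Ω →ₘ[μ] ℝ)) → (Ω →ₘ[μ] ℝ)} (hS0 : S 0 = 0)
    (hmono : ∀ X ∈ prodSet Li, ∀ Y ∈ prodSet Li, X ≤ Y → S X ≤ S Y)
    {W : Ω →ₘ[μ] ℝ} (hW : 0 ≤ W) {Z : Fin d → (Ω →ₘ[μ] ℝ)}
    (hZ : Z ∈ prodSet fun i => kdual (Li i))
    (hdom : ∀ X ∈ prodSet Li, ip (S X) W ≤ pairing X Z) (i : Fin d) : 0 ≤ Z i := by
  classical
  refine nonneg_of_forall_ip_nonneg ((hLi i).integrable_of_mem_kdual (hZ i)) fun V hVb hV => ?_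
  have hX : Pi.single i V ∈ prodSet Li := fun j => by
    rcases eq_or_ne j i with rfl | hj
    · simpa using (hLi j).linfty_subset V hVb
    · simpa [hj] using (hLi j).zero_mem
  have hSX : 0 ≤ S (Pi.single i V) :=
    hS0 ▸ hmono 0 (zero_mem_prodSet hLi) _ hX (Pi.single_nonneg.2 hV)
  calc 0 ≤ ip (S (Pi.single i V)) W := ip_nonneg hSX hW
    _ ≤ pairing (Pi.single i V) Z := hdom _ hX
    _ = ip V (Z i) := pairing_single_left i V Z

end

open scoped Classical in
theorem statement13_general {μ : Measure Ω} {d : ℕ}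
    (Li : Fin d → Set (Ω →ₘ[μ] ℝ)) (nrmX : Fin d → ((Ω →ₘ[μ] ℝ) → ℝ))
    (EE : Set (Ω →ₘ[μ] ℝ)) (nrmE : (Ω →ₘ[μ] ℝ) → ℝ)
    (S : (Fin d → (Ω →ₘ[μ] ℝ)) → (Ω →ₘ[μ] ℝ)) (A : Set (Ω →ₘ[μ] ℝ))
    (hLi : ∀ i, IsAdmissible (Li i) (nrmX i))
    (hE : IsAdmissible EE nrmE)
    (hS : IsAdmissibleImpact (prodSet Li) (prodSet fun i => kdual (Li i)) EE (kdual EE) S)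
    (hA : IsAdmissibleAcceptance (prodSet Li) EE (kdual EE) S A)
    -- `S` is positively homogeneous
    (hph : ∀ c : ℝ, 0 < c → ∀ X ∈ prodSet Li, S (c • X) = c • S X)
    -- `A` is a cone
    (hcone : ∀ c : ℝ, 0 < c → ∀ U ∈ A, c • U ∈ A) :
    ∀ Z ∈ prodSet fun i => kdual (Li i),
      alpha (prodSet Li) (kdual EE) A S Z =
        if Z ∈ {Z' ∈ prodSet fun i => kdual (Li i) |
            (∀ i, (0 : Ω →ₘ[μ] ℝ) ≤ Z' i) ∧
            ∃ W ∈ barrS A (kdual EE), ∀ X ∈ prodSet Li,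
              (∫ ω, S X ω * W ω ∂μ) ≤ pairing X Z'}
        then 0 else ⊥ := by
  intro Z hZ
  have hterm : ∀ W ∈ barrS A (kdual EE),
      suppS A W + ⨅ X ∈ prodSet Li, ((pairing X Z - ∫ ω, S X ω * W ω ∂μ : ℝ) : EReal) =
        if ∀ X ∈ prodSet Li, ip (S X) W ≤ pairing X Z then 0 else ⊥ := fun W hW => by
    rw [suppS_eq_zero_of_cone hA.zero_mem hcone hW.2, zero_add]
    exact iInf_pairing_sub_eq_ite hLi hS.normalized hph Z W
  rw [alpha, penalty, biSup_congr hterm, iSup₂_ite_eq]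
  refine if_congr ⟨fun ⟨W, hW, hdom⟩ => ⟨hZ, ?_, W, hW, hdom⟩, fun ⟨_, _, hD⟩ => hD⟩ rfl rfl
  exact nonneg_of_ip_le_pairing hLi hS.normalized hS.mono
    (barrS_nonneg hE hA.zero_mem hA.mono hW) hZ hdom

open scoped Classical in
/-- in the conic case `α` is the negative indicator function of the set `D`. -/
theorem statement13 {μ : Measure Ω} [IsProbabilityMeasure μ] {d : ℕ}
    (Li : Fin d → Set (Ω →ₘ[μ] ℝ)) (nrmX : Fin d → ((Ω →ₘ[μ] ℝ) → ℝ))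
    (EE : Set (Ω →ₘ[μ] ℝ)) (nrmE : (Ω →ₘ[μ] ℝ) → ℝ)
    (S : (Fin d → (Ω →ₘ[μ] ℝ)) → (Ω →ₘ[μ] ℝ)) (A : Set (Ω →ₘ[μ] ℝ))
    (hLi : ∀ i, IsAdmissible (Li i) (nrmX i))
    (hE : IsAdmissible EE nrmE)
    (hS : IsAdmissibleImpact (prodSet Li) (prodSet fun i => kdual (Li i)) EE (kdual EE) S)
    (hA : IsAdmissibleAcceptance (prodSet Li) EE (kdual EE) S A)
    -- `S` is positively homogeneous
    (hph : ∀ c : ℝ, 0 < c → ∀ X ∈ prodSet Li, S (c • X) = c • S X)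
    -- `A` is a cone
    (hcone : ∀ c : ℝ, 0 < c → ∀ U ∈ A, c • U ∈ A) :
    ∀ Z ∈ prodSet fun i => kdual (Li i),
      alpha (prodSet Li) (kdual EE) A S Z =
        if Z ∈ {Z' ∈ prodSet fun i => kdual (Li i) |
            (∀ i, (0 : Ω →ₘ[μ] ℝ) ≤ Z' i) ∧
            ∃ W ∈ barrS A (kdual EE), ∀ X ∈ prodSet Li,
              (∫ ω, S X ω * W ω ∂μ) ≤ pairing X Z'}
        then 0 else ⊥ :=
  statement13_general Li nrmX EE nrmE S A hLi hE hS hA hph hcone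

end SystemicRisk
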